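/- arXiv:2203.08317 — 2 statements merged into one kernel-verified Lean document; each statement's English description precedes it below -/
import Mathlib

section
/- Let K : ℝ → ℝ be a bounded, measurable, integrable and square-integrable kernel. Then the integrated variance of the sliding-window kernel density estimator satisfies ∫_ℝ Var(ĥ(x)) dx ≤ Σ_{i=1}^T α_i²·R(K)/(n_i·σ_i). -/
open MeasureTheory ProbabilityTheory Filter Real

/-- The rescaled kernel `K_σ(x) = (1/σ)·K(x/σ)`. -/
noncomputable def scaledKernel (K : ℝ → ℝ) (σ : ℝ) : ℝ → ℝ := fun u => (1 / σ) * K (u / σ)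

/-- `R(f) = ∫ f(x)² dx`. -/
noncomputable def Rquad (f : ℝ → ℝ) : ℝ := ∫ x : ℝ, (f x) ^ 2

/-!
By independence, `Var ĥ(x) = ∑_{i,j} (α_i/n_i)² Var K_{σ_i}(x - X_ij)`, and each variance is
at most the second moment `E K_{σ_i}(x - X_ij)²`. For an integrable `f` and any real random
variable `Y`, Fubini and translation invariance give
`∫ E f(x - Y) dx = E ∫ f(x - Y) dx = ∫ f`; applied to `f = K_σ²`, whose integral is `R(K)/σ`,
this integrates the bound over `x`.
-/

section Convolution

variable {Ω : Type*} [MeasurableSpace Ω] {μ : Measure Ω} {f : ℝ → ℝ} {Y : Ω → ℝ}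

theorem integrable_prod_comp_sub [IsFiniteMeasure μ] (hfm : Measurable f) (hf : Integrable f)
    (hY : Measurable Y) : Integrable (fun z : Ω × ℝ => f (z.2 - Y z.1)) (μ.prod volume) := by
  have hm : Measurable fun z : Ω × ℝ => f (z.2 - Y z.1) :=
    hfm.comp (measurable_snd.sub (hY.comp measurable_fst))
  refine (integrable_prod_iff hm.aestronglyMeasurable).2 ⟨ae_of_all _ fun ω => ?_, ?_⟩
  · exact hf.comp_sub_right (Y ω)
  · simp only [integral_sub_right_eq_self (fun x => ‖f x‖)]
    exact integrable_const _

theorem integrable_integral_comp_sub [IsFiniteMeasure μ] (hfm : Measurable f) (hf : Integrable f)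
    (hY : Measurable Y) : Integrable fun x => ∫ ω, f (x - Y ω) ∂μ :=
  (integrable_prod_comp_sub hfm hf hY).integral_prod_right

theorem integral_integral_comp_sub [IsProbabilityMeasure μ] (hfm : Measurable f)
    (hf : Integrable f) (hY : Measurable Y) : ∫ x, ∫ ω, f (x - Y ω) ∂μ = ∫ x, f x := by
  rw [← integral_integral_swap (f := fun ω x => f (x - Y ω))
    (integrable_prod_comp_sub hfm hf hY)]
  simp only [integral_sub_right_eq_self f, integral_const, probReal_univ, one_smul]

end Convolution

section ScaledKernel

variable {K : ℝ → ℝ} {σ : ℝ}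

theorem measurable_scaledKernel (hK : Measurable K) (σ : ℝ) : Measurable (scaledKernel K σ) :=
  (hK.comp (measurable_id.div_const σ)).const_mul _

theorem scaledKernel_sq (σ u : ℝ) : scaledKernel K σ u ^ 2 = (1 / σ) ^ 2 * K (u / σ) ^ 2 :=
  mul_pow _ _ _

theorem abs_scaledKernel_le {C : ℝ} (hC : ∀ x, |K x| ≤ C) (hσ : 0 < σ) (u : ℝ) :
    |scaledKernel K σ u| ≤ C / σ := by
  rw [scaledKernel, abs_mul, abs_of_pos (one_div_pos.2 hσ), one_div_mul_eq_div]
  exact div_le_div_of_nonneg_right (hC _) hσ.le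

theorem integrable_scaledKernel_sq (hK : Integrable fun x => K x ^ 2) (hσ : 0 < σ) :
    Integrable fun u => scaledKernel K σ u ^ 2 := by
  simp only [scaledKernel_sq]
  exact (hK.comp_div hσ.ne').const_mul _

theorem integral_scaledKernel_sq (hσ : 0 < σ) :
    ∫ u, scaledKernel K σ u ^ 2 = Rquad K / σ := by
  simp only [scaledKernel_sq]
  rw [integral_const_mul, Measure.integral_comp_div (fun t => K t ^ 2), abs_of_pos hσ,
    smul_eq_mul, Rquad]
  field_simp

end ScaledKernel

theorem variance_sum_const_mul_le {Ω ι : Type*} [MeasurableSpace Ω] {μ : Measure Ω}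
    [IsProbabilityMeasure μ] [Fintype ι] {Z : ι → Ω → ℝ} (hZ : ∀ q, MemLp (Z q) 2 μ)
    (hind : iIndepFun Z μ) (c : ι → ℝ) :
    Var[fun ω => ∑ q, c q * Z q ω; μ] ≤ ∑ q, c q ^ 2 * ∫ ω, Z q ω ^ 2 ∂μ := by
  have hcZ : iIndepFun (fun q ω => c q * Z q ω) μ :=
    hind.comp (fun q t => c q * t) fun q => measurable_const_mul (c q)
  have hsum : (fun ω => ∑ q, c q * Z q ω) = ∑ q, fun ω => c q * Z q ω := by
    ext ω; simp only [Finset.sum_apply]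
  rw [hsum, IndepFun.variance_sum (fun q _ => (hZ q).const_mul (c q))
    fun q _ r _ hqr => hcZ.indepFun hqr]
  gcongr with q
  rw [variance_const_mul]
  gcongr
  exact variance_le_expectation_sq (hZ q).aestronglyMeasurable

theorem sliding_window_integrated_variance_le_general
    {Ω : Type*} [MeasurableSpace Ω] (μ : Measure Ω) [IsProbabilityMeasure μ]
    (T : ℕ)
    (nb : Fin T → ℕ)
    (X : (i : Fin T) → Fin (nb i) → Ω → ℝ)
    (hXmeas : ∀ i j, Measurable (X i j))
    (hindep : iIndepFun
      (fun q : (i : Fin T) × Fin (nb i) => X q.1 q.2) μ)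
    -- the kernel: bounded, measurable, integrable and square-integrable
    (K : ℝ → ℝ) (hKmeas : Measurable K) (hKbdd : ∃ C, ∀ x, |K x| ≤ C)
    (hKsq : Integrable (fun x => (K x) ^ 2))
    (σ : Fin T → ℝ) (hσ : ∀ i, 0 < σ i)
    (α : Fin T → ℝ)
    (hhat : ℝ → Ω → ℝ)
    (hhat_def : ∀ x ω, hhat x ω
      = ∑ i, α i * ((nb i : ℝ)⁻¹ * ∑ j, scaledKernel K (σ i) (x - X i j ω))) :
    (∫ x : ℝ, variance (fun ω => hhat x ω) μ)
      ≤ ∑ i, (α i) ^ 2 * Rquad K / ((nb i : ℝ) * σ i) := by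
  obtain ⟨C, hC⟩ := hKbdd
  set c : (i : Fin T) × Fin (nb i) → ℝ := fun q => α q.1 * (nb q.1 : ℝ)⁻¹
  have hKσ_sq (i : Fin T) : Measurable fun u => scaledKernel K (σ i) u ^ 2 :=
    (measurable_scaledKernel hKmeas _).pow_const 2
  have hmoment (q : (i : Fin T) × Fin (nb i)) :
      Integrable fun x => ∫ ω, scaledKernel K (σ q.1) (x - X q.1 q.2 ω) ^ 2 ∂μ :=
    integrable_integral_comp_sub (hKσ_sq q.1) (integrable_scaledKernel_sq hKsq (hσ q.1))
      (hXmeas q.1 q.2)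
  have hvar (x : ℝ) : Var[fun ω => hhat x ω; μ] ≤
      ∑ q, c q ^ 2 * ∫ ω, scaledKernel K (σ q.1) (x - X q.1 q.2 ω) ^ 2 ∂μ := by
    have hsigma : (fun ω => hhat x ω) =
        fun ω => ∑ q, c q * scaledKernel K (σ q.1) (x - X q.1 q.2 ω) := by
      ext ω
      simp only [hhat_def, Fintype.sum_sigma, c, Finset.mul_sum, mul_assoc]
    have hmeas (q : (i : Fin T) × Fin (nb i)) :
        Measurable fun t => scaledKernel K (σ q.1) (x - t) :=
      (measurable_scaledKernel hKmeas _).comp (measurable_const.sub measurable_id)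
    rw [hsigma]
    refine variance_sum_const_mul_le (fun q => ?_) (hindep.comp _ hmeas) c
    exact MemLp.of_bound ((hmeas q).comp (hXmeas q.1 q.2)).aestronglyMeasurable (C / σ q.1)
      (ae_of_all _ fun ω => abs_scaledKernel_le hC (hσ q.1) _)
  calc ∫ x, Var[fun ω => hhat x ω; μ]
      ≤ ∫ x, ∑ q, c q ^ 2 * ∫ ω, scaledKernel K (σ q.1) (x - X q.1 q.2 ω) ^ 2 ∂μ :=
        integral_mono_of_nonneg (ae_of_all _ fun x => variance_nonneg _ _)
          (integrable_finsetSum _ fun q _ => (hmoment q).const_mul _) (ae_of_all _ hvar)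
    _ = ∑ q, c q ^ 2 * (Rquad K / σ q.1) := by
        rw [integral_finsetSum _ fun q _ => (hmoment q).const_mul _]
        simp only [integral_const_mul, integral_integral_comp_sub (hKσ_sq _)
          (integrable_scaledKernel_sq hKsq (hσ _)) (hXmeas _ _), integral_scaledKernel_sq (hσ _)]
    _ = ∑ i, (α i) ^ 2 * Rquad K / ((nb i : ℝ) * σ i) := by
        simp only [Fintype.sum_sigma, Finset.sum_const, Finset.card_univ, Fintype.card_fin,
          nsmul_eq_mul, c]
        refine Finset.sum_congr rfl fun i _ => ?_
        rcases eq_or_ne (nb i : ℝ) 0 with hn | hn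
        · simp [hn]
        · field_simp

/-- **Integrated variance bound for the sliding-window kernel density estimator**:
`∫ Var(ĥ(x)) dx ≤ Σ_i α_i²·R(K)/(n_i·σ_i)`. -/
theorem sliding_window_integrated_variance_le
    {Ω : Type*} [MeasurableSpace Ω] (μ : Measure Ω) [IsProbabilityMeasure μ]
    (T : ℕ) (hT : 0 < T)
    (nb : Fin T → ℕ) (hnb : ∀ i, 0 < nb i)
    (p : Fin T → ℝ → ℝ) (hpmeas : ∀ i, Measurable (p i))
    (X : (i : Fin T) → Fin (nb i) → Ω → ℝ)
    (hXmeas : ∀ i j, Measurable (X i j))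
    (hindep : iIndepFun
      (fun q : (i : Fin T) × Fin (nb i) => X q.1 q.2) μ)
    (hdist : ∀ i j, Measure.map (X i j) μ
      = volume.withDensity (fun x => ENNReal.ofReal (p i x)))
    (hppos : ∀ i x, 0 ≤ p i x) (hpint : ∀ i, ∫ x : ℝ, p i x = 1)
    -- the kernel: bounded, measurable, integrable and square-integrable
    (K : ℝ → ℝ) (hKmeas : Measurable K) (hKbdd : ∃ C, ∀ x, |K x| ≤ C)
    (hKint : Integrable K) (hKsq : Integrable (fun x => (K x) ^ 2))
    (σ : Fin T → ℝ) (hσ : ∀ i, 0 < σ i)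
    (α : Fin T → ℝ) (hα : ∀ i, 0 ≤ α i) (hαsum : ∑ i, α i = 1)
    (hhat : ℝ → Ω → ℝ)
    (hhat_def : ∀ x ω, hhat x ω
      = ∑ i, α i * ((nb i : ℝ)⁻¹ * ∑ j, scaledKernel K (σ i) (x - X i j ω))) :
    (∫ x : ℝ, variance (fun ω => hhat x ω) μ)
      ≤ ∑ i, (α i) ^ 2 * Rquad K / ((nb i : ℝ) * σ i) :=
  sliding_window_integrated_variance_le_general μ T nb X hXmeas hindep K hKmeas hKbdd hKsq σ hσ α
    hhat hhat_def
end

section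
/- Let K : ℝ → ℝ be a bounded probability density with R(K) < ∞. For each n ∈ ℕ, let ĥ_n be a sliding-window kernel density estimator built from T mutually independent batches, where batch i has size n_i(n), bandwidth σ_i(n) > 0, and nonnegative weights α_i(n) summing to 1 over i, and each batch consists of i.i.d. samples from a bounded probability density p_i, with p_T continuous at the point x ∈ ℝ. Assume that as n → ∞: σ_i(n) → 0 and n_i(n)·σ_i(n) → ∞ for every i, α_i(n) → 0 for every i < T, and α_T(n) → 1. Then E[(ĥ_n(x) − p_T(x))²] → 0, and consequently for every ε > 0, P( |ĥ_n(x) − p_T(x)|² > ε ) → 0 as n → ∞. -/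
/-!
Bias–variance decomposition: the mean squared error at `x` is the variance of the estimator
plus its squared bias. A sample `K_σ(x - Y)` with `Y ~ p` has mean `∫ K(u) p(x - σu) du`, which
tends to `p(x)` as `σ → 0` by dominated convergence, and variance at most `‖p‖_∞ R(K) / σ`. By
independence the variance of the estimator is at most `∑ᵢ αᵢ² ‖pᵢ‖_∞ R(K) / (nᵢ σᵢ) → 0`, and since
the weights concentrate on the current batch its mean tends to `p_T(x)`. Markov's inequality
turns convergence in mean square into convergence in probability.
-/

open MeasureTheory ProbabilityTheory Filter Real Topology

lemma integral_scaledKernel_sub_mul (G q : ℝ → ℝ) (x : ℝ) {σ : ℝ} (hσ : 0 < σ) :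
    ∫ y, scaledKernel G σ (x - y) * q y = ∫ u, G u * q (x - σ * u) := by
  have hscale := Measure.integral_comp_mul_left (fun v => scaledKernel G σ v * q (x - v)) σ
  rw [abs_of_pos (inv_pos.mpr hσ), smul_eq_mul] at hscale
  calc ∫ y, scaledKernel G σ (x - y) * q y = ∫ v, scaledKernel G σ v * q (x - v) := by
        rw [← integral_sub_left_eq_self _ volume x]
        simp only [sub_sub_cancel]
    _ = σ * ∫ u, scaledKernel G σ (σ * u) * q (x - σ * u) := by
        rw [hscale, ← mul_assoc, mul_inv_cancel₀ hσ.ne', one_mul]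
    _ = ∫ u, G u * q (x - σ * u) := by
        rw [← integral_const_mul]
        congr 1 with u
        simp only [scaledKernel, mul_div_cancel_left₀ _ hσ.ne']
        field_simp

lemma scaledKernel_sq_s12 (K : ℝ → ℝ) (σ v : ℝ) :
    scaledKernel K σ v ^ 2 = σ⁻¹ * scaledKernel (fun z => K z ^ 2) σ v := by
  simp only [scaledKernel]
  ring

lemma abs_integral_mul_le {α : Type*} [MeasurableSpace α] {ν : Measure α} {g q : α → ℝ}
    {C : ℝ} (hg : Integrable g ν) (hg0 : ∀ u, 0 ≤ g u) (hq : ∀ u, |q u| ≤ C) :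
    |∫ u, g u * q u ∂ν| ≤ C * ∫ u, g u ∂ν := by
  rw [← integral_const_mul (μ := ν) C g, ← Real.norm_eq_abs]
  refine norm_integral_le_of_norm_le (hg.const_mul C) (ae_of_all _ fun u => ?_)
  rw [Real.norm_eq_abs, abs_mul, abs_of_nonneg (hg0 u), mul_comm C]
  exact mul_le_mul_of_nonneg_left (hq u) (hg0 u)

lemma tendsto_integral_mul_comp_sub_mul {ι : Type*} {l : Filter ι} [l.IsCountablyGenerated]
    {G q : ℝ → ℝ} {s : ι → ℝ} {x C : ℝ} (hG : Integrable G) (hq : Measurable q)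
    (hqC : ∀ y, |q y| ≤ C) (hqx : ContinuousAt q x) (hs : Tendsto s l (𝓝 0)) :
    Tendsto (fun n => ∫ u, G u * q (x - s n * u)) l (𝓝 ((∫ u, G u) * q x)) := by
  rw [← integral_mul_const]
  refine tendsto_integral_filter_of_dominated_convergence (fun u => |G u| * C)
    (Eventually.of_forall fun n => hG.aestronglyMeasurable.mul
      (hq.comp (measurable_const.sub (measurable_id.const_mul _))).aestronglyMeasurable)
    (Eventually.of_forall fun n => ae_of_all _ fun u => ?_) (hG.abs.mul_const C)
    (ae_of_all _ fun u => ?_)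
  · rw [Real.norm_eq_abs, abs_mul]
    exact mul_le_mul_of_nonneg_left (hqC _) (abs_nonneg _)
  · have hshift : Tendsto (fun n => x - s n * u) l (𝓝 x) := by
      simpa using tendsto_const_nhds.sub (hs.mul_const u)
    exact tendsto_const_nhds.mul (hqx.tendsto.comp hshift)

lemma measurable_scaledKernel_s12 {G : ℝ → ℝ} (hG : Measurable G) (σ : ℝ) :
    Measurable (scaledKernel G σ) :=
  measurable_const.mul (hG.comp (measurable_id.div_const σ))

lemma measurable_scaledKernel_sub {G : ℝ → ℝ} (hG : Measurable G) (σ x : ℝ) :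
    Measurable fun v => scaledKernel G σ (x - v) :=
  (measurable_scaledKernel_s12 hG σ).comp (measurable_id.const_sub x)

section KernelSample

variable {Ω : Type*} [MeasurableSpace Ω] {μ : Measure Ω}

lemma integral_comp_eq_integral_mul_of_map_eq_withDensity {α : Type*} [MeasurableSpace α]
    {ν : Measure α} {X : Ω → α} {p φ : α → ℝ} (hX : AEMeasurable X μ) (hp : Measurable p)
    (hp0 : ∀ y, 0 ≤ p y) (hlaw : μ.map X = ν.withDensity (fun y => ENNReal.ofReal (p y)))
    (hφ : Measurable φ) :
    ∫ ω, φ (X ω) ∂μ = ∫ y, p y * φ y ∂ν := by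
  rw [← integral_map hX hφ.aestronglyMeasurable, hlaw,
    integral_withDensity_eq_integral_toReal_smul hp.ennreal_ofReal
      (ae_of_all _ fun _ => ENNReal.ofReal_lt_top)]
  simp only [ENNReal.toReal_ofReal (hp0 _), smul_eq_mul]

variable {X : Ω → ℝ} {p : ℝ → ℝ}

lemma memLp_scaledKernel_sub_comp [IsFiniteMeasure μ] {K : ℝ → ℝ} (hK : Measurable K) {C : ℝ}
    (hKC : ∀ z, |K z| ≤ C) (hX : AEMeasurable X μ) (x σ : ℝ) (r : ENNReal) :
    MemLp (fun ω => scaledKernel K σ (x - X ω)) r μ := by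
  refine MemLp.of_bound ((measurable_scaledKernel_sub hK σ x).comp_aemeasurable
    hX).aestronglyMeasurable (|1 / σ| * C) (ae_of_all _ fun ω => ?_)
  rw [Real.norm_eq_abs, scaledKernel, abs_mul]
  exact mul_le_mul_of_nonneg_left (hKC _) (abs_nonneg _)

lemma integral_scaledKernel_sub_comp (hX : AEMeasurable X μ) (hp : Measurable p)
    (hp0 : ∀ y, 0 ≤ p y) (hlaw : μ.map X = volume.withDensity (fun y => ENNReal.ofReal (p y)))
    {G : ℝ → ℝ} (hG : Measurable G) (x : ℝ) {σ : ℝ} (hσ : 0 < σ) :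
    ∫ ω, scaledKernel G σ (x - X ω) ∂μ = ∫ u, G u * p (x - σ * u) := by
  rw [integral_comp_eq_integral_mul_of_map_eq_withDensity hX hp hp0 hlaw
    (measurable_scaledKernel_sub hG σ x), ← integral_scaledKernel_sub_mul G p x hσ]
  simp only [mul_comm (p _)]

lemma variance_scaledKernel_sub_comp_le [IsProbabilityMeasure μ] (hX : AEMeasurable X μ)
    (hp : Measurable p) (hp0 : ∀ y, 0 ≤ p y)
    (hlaw : μ.map X = volume.withDensity (fun y => ENNReal.ofReal (p y)))
    {K : ℝ → ℝ} (hK : Measurable K) (hK2 : Integrable (fun z => K z ^ 2))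
    {C : ℝ} (hpC : ∀ y, |p y| ≤ C) (x : ℝ) {σ : ℝ} (hσ : 0 < σ) :
    variance (fun ω => scaledKernel K σ (x - X ω)) μ ≤ C * (∫ z, K z ^ 2) / σ := by
  calc variance (fun ω => scaledKernel K σ (x - X ω)) μ
      ≤ ∫ ω, scaledKernel K σ (x - X ω) ^ 2 ∂μ :=
        (variance_le_expectation_sq ((measurable_scaledKernel_sub hK σ x).comp_aemeasurable
          hX).aestronglyMeasurable).trans_eq rfl
    _ = σ⁻¹ * ∫ u, K u ^ 2 * p (x - σ * u) := by
        simp only [scaledKernel_sq_s12]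
        rw [integral_const_mul,
          integral_scaledKernel_sub_comp hX hp hp0 hlaw (hK.pow_const 2) x hσ]
    _ ≤ σ⁻¹ * (C * ∫ z, K z ^ 2) := by
        gcongr
        exact (le_abs_self _).trans
          (abs_integral_mul_le hK2 (fun z => sq_nonneg _) fun _ => hpC _)
    _ = C * (∫ z, K z ^ 2) / σ := by ring

end KernelSample

section WeightedBatchMean

variable {Ω ι : Type*} [Fintype ι] {n : ι → ℕ}

noncomputable def weightedBatchMean (a : ι → ℝ) (Y : (i : ι) → Fin (n i) → Ω → ℝ) (ω : Ω) :
    ℝ :=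
  ∑ i, a i * ((n i : ℝ)⁻¹ * ∑ j, Y i j ω)

lemma weightedBatchMean_eq_sum_sigma (a : ι → ℝ) (Y : (i : ι) → Fin (n i) → Ω → ℝ) :
    weightedBatchMean a Y = ∑ q : (i : ι) × Fin (n i), (a q.1 * (n q.1 : ℝ)⁻¹) • Y q.1 q.2 := by
  ext ω
  simp only [weightedBatchMean, Finset.sum_apply, Pi.smul_apply, smul_eq_mul,
    ← Finset.univ_sigma_univ, Finset.sum_sigma, Finset.mul_sum, mul_assoc]

variable [MeasurableSpace Ω] {μ : Measure Ω} {Y : (i : ι) → Fin (n i) → Ω → ℝ}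

lemma memLp_weightedBatchMean {r : ENNReal} (a : ι → ℝ)
    (hY : ∀ i j, MemLp (Y i j) r μ) : MemLp (weightedBatchMean a Y) r μ := by
  rw [weightedBatchMean_eq_sum_sigma]
  exact memLp_finsetSum' _ fun q _ => (hY q.1 q.2).const_smul _

lemma integral_weightedBatchMean (a : ι → ℝ) {m : ι → ℝ} (hY : ∀ i j, Integrable (Y i j) μ)
    (hn : ∀ i, n i ≠ 0) (hm : ∀ i j, ∫ ω, Y i j ω ∂μ = m i) :
    ∫ ω, weightedBatchMean a Y ω ∂μ = ∑ i, a i * m i := by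
  unfold weightedBatchMean
  rw [integral_finsetSum _ fun i _ =>
    ((integrable_finsetSum _ fun j _ => hY i j).const_mul _).const_mul _]
  refine Finset.sum_congr rfl fun i _ => ?_
  rw [integral_const_mul, integral_const_mul, integral_finsetSum _ fun j _ => hY i j]
  simp only [hm, Finset.sum_const, Finset.card_univ, Fintype.card_fin, nsmul_eq_mul,
    inv_mul_cancel_left₀ (Nat.cast_ne_zero.mpr (hn i) : (n i : ℝ) ≠ 0)]

lemma variance_weightedBatchMean_le (a : ι → ℝ) {V : ι → ℝ} (hY : ∀ i j, MemLp (Y i j) 2 μ)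
    (hindep : iIndepFun (fun q : (i : ι) × Fin (n i) => Y q.1 q.2) μ)
    (hV : ∀ i j, variance (Y i j) μ ≤ V i) :
    variance (weightedBatchMean a Y) μ ≤ ∑ i, a i ^ 2 * (V i / n i) := by
  have hpair : Set.Pairwise (Finset.univ : Finset ((i : ι) × Fin (n i)))
      fun q q' : (i : ι) × Fin (n i) => IndepFun ((a q.1 * (n q.1 : ℝ)⁻¹) • Y q.1 q.2)
        ((a q'.1 * (n q'.1 : ℝ)⁻¹) • Y q'.1 q'.2) μ :=
    fun q _ q' _ hne =>
      (hindep.indepFun hne).comp (measurable_const_mul _) (measurable_const_mul _)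
  rw [weightedBatchMean_eq_sum_sigma,
    IndepFun.variance_sum (fun q _ => (hY _ _).const_smul _) hpair,
    ← Finset.univ_sigma_univ, Finset.sum_sigma]
  refine Finset.sum_le_sum fun i _ => ?_
  calc ∑ j, variance ((a i * (n i : ℝ)⁻¹) • Y i j) μ
      ≤ ∑ _j : Fin (n i), (a i * (n i : ℝ)⁻¹) ^ 2 * V i := by
        simp only [variance_smul]
        gcongr with j
        exact hV i j
    _ = a i ^ 2 * (V i / n i) := by
        rw [Finset.sum_const, Finset.card_univ, Fintype.card_fin, nsmul_eq_mul]
        rcases eq_or_ne (n i : ℝ) 0 with h | h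
        · simp [h]
        · field_simp

end WeightedBatchMean

lemma tendsto_sum_mul_of_concentrating {ι κ : Type*} [Fintype κ] {l : Filter ι}
    {α m : ι → κ → ℝ} {t : κ} {c : ℝ} (hα0 : ∀ i ≠ t, Tendsto (α · i) l (𝓝 0))
    (hα1 : Tendsto (α · t) l (𝓝 1)) (hm : ∀ i, IsBoundedUnder (· ≤ ·) l fun n => |m n i|)
    (hmt : Tendsto (m · t) l (𝓝 c)) :
    Tendsto (fun n => ∑ i, α n i * m n i) l (𝓝 c) := by
  classical
  have hterm : ∀ i, Tendsto (fun n => α n i * m n i) l (𝓝 (if i = t then c else 0)) := by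
    intro i
    split_ifs with hi
    · subst hi
      simpa using hα1.mul hmt
    · exact (hα0 i hi).zero_mul_isBoundedUnder_le (hm i)
  simpa using tendsto_finsetSum Finset.univ fun i _ => hterm i

lemma tendsto_sum_sq_mul_of_concentrating {ι κ : Type*} [Fintype κ] {l : Filter ι}
    {α v : ι → κ → ℝ} {t : κ} (hα0 : ∀ i ≠ t, Tendsto (α · i) l (𝓝 0))
    (hα1 : Tendsto (α · t) l (𝓝 1)) (hv : ∀ i, Tendsto (v · i) l (𝓝 0)) :
    Tendsto (fun n => ∑ i, α n i ^ 2 * v n i) l (𝓝 0) := by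
  have hterm : ∀ i, Tendsto (fun n => α n i ^ 2 * v n i) l (𝓝 0) := by
    intro i
    by_cases hi : i = t
    · subst hi
      simpa using (hα1.pow 2).mul (hv i)
    · simpa using ((hα0 i hi).pow 2).mul (hv i)
  simpa using tendsto_finsetSum Finset.univ fun i _ => hterm i

section MeanSquaredError

variable {Ω : Type*} [MeasurableSpace Ω] {μ : Measure Ω} [IsProbabilityMeasure μ]

lemma integral_sub_sq_eq_variance_add {Y : Ω → ℝ} (hY : MemLp Y 2 μ) (c : ℝ) :
    ∫ ω, (Y ω - c) ^ 2 ∂μ = variance Y μ + (∫ ω, Y ω ∂μ - c) ^ 2 := by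
  have hYc : MemLp (fun ω => Y ω - c) 2 μ := hY.sub (memLp_const c)
  rw [← variance_sub_const hY.aestronglyMeasurable c, variance_eq_sub hYc,
    integral_sub (hY.integrable one_le_two) (integrable_const c)]
  simp

lemma tendsto_integral_sub_sq_of_tendsto_variance {ι : Type*} {l : Filter ι} {Y : ι → Ω → ℝ}
    {c : ℝ} (hY : ∀ n, MemLp (Y n) 2 μ) (hvar : Tendsto (fun n => variance (Y n) μ) l (𝓝 0))
    (hmean : Tendsto (fun n => ∫ ω, Y n ω ∂μ) l (𝓝 c)) :
    Tendsto (fun n => ∫ ω, (Y n ω - c) ^ 2 ∂μ) l (𝓝 0) := by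
  simp only [integral_sub_sq_eq_variance_add (hY _)]
  simpa using hvar.add ((hmean.sub_const c).pow 2)

end MeanSquaredError

lemma tendsto_measure_lt_of_tendsto_integral {Ω ι : Type*} [MeasurableSpace Ω] {μ : Measure Ω}
    {l : Filter ι} {Z : ι → Ω → ℝ} (hZ0 : ∀ n, 0 ≤ᵐ[μ] Z n) (hZ : ∀ n, Integrable (Z n) μ)
    (h : Tendsto (fun n => ∫ ω, Z n ω ∂μ) l (𝓝 0)) {ε : ℝ} (hε : 0 < ε) :
    Tendsto (fun n => μ {ω | ε < Z n ω}) l (𝓝 0) := by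
  have hε' : ENNReal.ofReal ε ≠ 0 := (ENNReal.ofReal_pos.mpr hε).ne'
  have hmarkov : ∀ n,
      μ {ω | ε < Z n ω} ≤ ENNReal.ofReal (∫ ω, Z n ω ∂μ) / ENNReal.ofReal ε := by
    intro n
    rw [ofReal_integral_eq_lintegral_ofReal (hZ n) (hZ0 n)]
    refine (measure_mono fun ω (hω : ε < Z n ω) => ?_).trans
      (meas_ge_le_lintegral_div (hZ n).aemeasurable.ennreal_ofReal hε' ENNReal.ofReal_ne_top)
    exact ENNReal.ofReal_le_ofReal hω.le
  refine tendsto_of_tendsto_of_tendsto_of_le_of_le tendsto_const_nhds ?_ (fun _ => bot_le) hmarkov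
  simpa using ENNReal.Tendsto.div_const (ENNReal.tendsto_ofReal h) (Or.inr hε')

section SlidingWindowKDE

variable {Ω κ : Type*} [MeasurableSpace Ω] {μ : Measure Ω} [Fintype κ] {n : κ → ℕ}

noncomputable def slidingWindowKDE (K : ℝ → ℝ) (x : ℝ) (σ a : κ → ℝ)
    (X : (i : κ) → Fin (n i) → Ω → ℝ) : Ω → ℝ :=
  weightedBatchMean a fun i j ω => scaledKernel K (σ i) (x - X i j ω)

variable {K : ℝ → ℝ} {x : ℝ} {σ a : κ → ℝ} {X : (i : κ) → Fin (n i) → Ω → ℝ} {p : κ → ℝ → ℝ}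

lemma memLp_slidingWindowKDE [IsFiniteMeasure μ] (hK : Measurable K) {C : ℝ}
    (hKC : ∀ z, |K z| ≤ C) (hX : ∀ i j, AEMeasurable (X i j) μ) (r : ENNReal) :
    MemLp (slidingWindowKDE K x σ a X) r μ :=
  memLp_weightedBatchMean a fun i j => memLp_scaledKernel_sub_comp hK hKC (hX i j) x (σ i) r

lemma integral_slidingWindowKDE [IsFiniteMeasure μ] (hK : Measurable K) {C : ℝ}
    (hKC : ∀ z, |K z| ≤ C) (hσ : ∀ i, 0 < σ i) (hn : ∀ i, n i ≠ 0)
    (hX : ∀ i j, AEMeasurable (X i j) μ) (hp : ∀ i, Measurable (p i)) (hp0 : ∀ i y, 0 ≤ p i y)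
    (hlaw : ∀ i j, μ.map (X i j) = volume.withDensity (fun y => ENNReal.ofReal (p i y))) :
    ∫ ω, slidingWindowKDE K x σ a X ω ∂μ = ∑ i, a i * ∫ u, K u * p i (x - σ i * u) :=
  integral_weightedBatchMean a
    (fun i j => (memLp_scaledKernel_sub_comp hK hKC (hX i j) x (σ i) 1).integrable le_rfl) hn
    fun i j => integral_scaledKernel_sub_comp (hX i j) (hp i) (hp0 i) (hlaw i j) hK x (hσ i)

lemma variance_slidingWindowKDE_le [IsProbabilityMeasure μ] (hK : Measurable K) {CK : ℝ}
    (hKC : ∀ z, |K z| ≤ CK) (hK2 : Integrable (fun z => K z ^ 2)) (hσ : ∀ i, 0 < σ i)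
    (hX : ∀ i j, Measurable (X i j))
    (hindep : iIndepFun (fun q : (i : κ) × Fin (n i) => X q.1 q.2) μ)
    (hp : ∀ i, Measurable (p i)) (hp0 : ∀ i y, 0 ≤ p i y) {C : κ → ℝ}
    (hpC : ∀ i y, |p i y| ≤ C i)
    (hlaw : ∀ i j, μ.map (X i j) = volume.withDensity (fun y => ENNReal.ofReal (p i y))) :
    variance (slidingWindowKDE K x σ a X) μ ≤
      ∑ i, a i ^ 2 * (C i * (∫ z, K z ^ 2) / σ i / n i) :=
  variance_weightedBatchMean_le a
    (fun i j => memLp_scaledKernel_sub_comp hK hKC (hX i j).aemeasurable x (σ i) 2)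
    (hindep.comp _ fun q => measurable_scaledKernel_sub hK (σ q.1) x) fun i j =>
      variance_scaledKernel_sub_comp_le (hX i j).aemeasurable (hp i) (hp0 i) (hlaw i j) hK hK2
        (hpC i) x (hσ i)

end SlidingWindowKDE

theorem takde_pointwise_consistency_general
    {Ω : Type*} [MeasurableSpace Ω] (μ : Measure Ω) [IsProbabilityMeasure μ]
    (T : ℕ) (hT : 0 < T)
    -- the kernel: a bounded probability density with `R(K) < ∞`
    (K : ℝ → ℝ) (hKmeas : Measurable K) (hKpos : ∀ z, 0 ≤ K z)
    (hKint : Integrable K) (hKone : ∫ z : ℝ, K z = 1)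
    (hKbdd : ∃ C, ∀ z, K z ≤ C) (hKsq : Integrable (fun z => (K z) ^ 2))
    -- the batch densities: bounded probability densities
    (p : Fin T → ℝ → ℝ) (hpmeas : ∀ i, Measurable (p i))
    (hppos : ∀ i y, 0 ≤ p i y)
    (hpbdd : ∀ i, ∃ C, ∀ y, p i y ≤ C)
    (x : ℝ)
    (hpcont : ContinuousAt (p (⟨T - 1, Nat.sub_lt hT Nat.one_pos⟩ : Fin T)) x)
    -- for each n: batch sizes, bandwidths, weights, and samples
    (nb : ℕ → Fin T → ℕ) (hnb : ∀ n i, 0 < nb n i)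
    (σ : ℕ → Fin T → ℝ) (hσ : ∀ n i, 0 < σ n i)
    (α : ℕ → Fin T → ℝ)
    (X : (n : ℕ) → (i : Fin T) → Fin (nb n i) → Ω → ℝ)
    (hXmeas : ∀ n i j, Measurable (X n i j))
    (hindep : ∀ n, iIndepFun
      (fun q : (i : Fin T) × Fin (nb n i) => X n q.1 q.2) μ)
    (hdist : ∀ n i j, Measure.map (X n i j) μ
      = volume.withDensity (fun y => ENNReal.ofReal (p i y)))
    -- asymptotic assumptions
    (hσ0 : ∀ i, Tendsto (fun n => σ n i) atTop (𝓝 0))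
    (hnσ : ∀ i, Tendsto (fun n => (nb n i : ℝ) * σ n i) atTop atTop)
    (hα0 : ∀ i : Fin T, i ≠ (⟨T - 1, Nat.sub_lt hT Nat.one_pos⟩ : Fin T) →
      Tendsto (fun n => α n i) atTop (𝓝 0))
    (hα1 : Tendsto (fun n => α n (⟨T - 1, Nat.sub_lt hT Nat.one_pos⟩ : Fin T))
      atTop (𝓝 1))
    -- the sliding-window estimators
    (hhat : ℕ → Ω → ℝ)
    (hhat_def : ∀ n ω, hhat n ω
      = ∑ i, α n i * ((nb n i : ℝ)⁻¹ * ∑ j, scaledKernel K (σ n i) (x - X n i j ω))) :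
    Tendsto
      (fun n => ∫ ω,
        (hhat n ω - p (⟨T - 1, Nat.sub_lt hT Nat.one_pos⟩ : Fin T) x) ^ 2 ∂μ)
      atTop (𝓝 0)
    ∧ ∀ ε : ℝ, 0 < ε →
        Tendsto
          (fun n => μ {ω |
            ε < |hhat n ω - p (⟨T - 1, Nat.sub_lt hT Nat.one_pos⟩ : Fin T) x| ^ 2})
          atTop (𝓝 0) := by
  set t : Fin T := ⟨T - 1, Nat.sub_lt hT Nat.one_pos⟩
  obtain ⟨CK, hCK⟩ := hKbdd
  choose Cp hCp using hpbdd
  have hKabs : ∀ z, |K z| ≤ CK := fun z => (abs_of_nonneg (hKpos z)).trans_le (hCK z)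
  have hpabs : ∀ i y, |p i y| ≤ Cp i := fun i y =>
    (abs_of_nonneg (hppos i y)).trans_le (hCp i y)
  obtain rfl : hhat = fun n => slidingWindowKDE K x (σ n) (α n) (X n) := funext₂ hhat_def
  have hL2 n : MemLp (slidingWindowKDE K x (σ n) (α n) (X n)) 2 μ :=
    memLp_slidingWindowKDE hKmeas hKabs (fun i j => (hXmeas n i j).aemeasurable) 2
  have hmean : Tendsto (fun n => ∫ ω, slidingWindowKDE K x (σ n) (α n) (X n) ω ∂μ) atTop
      (𝓝 (p t x)) := by
    simp only [integral_slidingWindowKDE hKmeas hKabs (hσ _) (fun i => (hnb _ i).ne')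
      (fun i j => (hXmeas _ i j).aemeasurable) hpmeas hppos (hdist _)]
    refine tendsto_sum_mul_of_concentrating hα0 hα1
      (fun i => isBoundedUnder_of ⟨Cp i, fun n => ?_⟩) ?_
    · simpa [hKone] using abs_integral_mul_le hKint hKpos fun u => hpabs i (x - σ n i * u)
    · simpa [hKone] using
        tendsto_integral_mul_comp_sub_mul hKint (hpmeas t) (hpabs t) hpcont (hσ0 t)
  have hvar : Tendsto (fun n => variance (slidingWindowKDE K x (σ n) (α n) (X n)) μ) atTop
      (𝓝 0) :=
    squeeze_zero (fun n => variance_nonneg _ _)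
      (fun n => variance_slidingWindowKDE_le hKmeas hKabs hKsq (hσ n) (hXmeas n) (hindep n)
        hpmeas hppos hpabs (hdist n))
      (tendsto_sum_sq_mul_of_concentrating hα0 hα1 fun i => by
        simpa [div_eq_mul_inv, mul_comm (σ _ i), mul_assoc] using
          (hnσ i).inv_tendsto_atTop.const_mul (Cp i * ∫ z, K z ^ 2))
  have hmse := tendsto_integral_sub_sq_of_tendsto_variance hL2 hvar hmean
  refine ⟨hmse, fun ε hε => ?_⟩
  simpa only [sq_abs, Pi.sub_apply] using tendsto_measure_lt_of_tendsto_integral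
    (fun n => ae_of_all _ fun ω => sq_nonneg _)
    (fun n => ((hL2 n).sub (memLp_const (p t x))).integrable_sq) hmse hε

/-- **Corollary 2 (weak pointwise consistency of TAKDE)**: if the bandwidths
satisfy `σ_i(n) → 0`, `n_i(n)·σ_i(n) → ∞`, and the weights concentrate on the
current batch (`α_i(n) → 0` for `i < T`, `α_T(n) → 1`), then the mean squared
error of the sliding-window estimator at a continuity point `x` of `p_T`
vanishes, and hence `P(|ĥ_n(x) − p_T(x)|² > ε) → 0` for every `ε > 0`. -/
theorem takde_pointwise_consistency
    {Ω : Type*} [MeasurableSpace Ω] (μ : Measure Ω) [IsProbabilityMeasure μ]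
    (T : ℕ) (hT : 0 < T)
    -- the kernel: a bounded probability density with `R(K) < ∞`
    (K : ℝ → ℝ) (hKmeas : Measurable K) (hKpos : ∀ z, 0 ≤ K z)
    (hKint : Integrable K) (hKone : ∫ z : ℝ, K z = 1)
    (hKbdd : ∃ C, ∀ z, K z ≤ C) (hKsq : Integrable (fun z => (K z) ^ 2))
    -- the batch densities: bounded probability densities
    (p : Fin T → ℝ → ℝ) (hpmeas : ∀ i, Measurable (p i))
    (hppos : ∀ i y, 0 ≤ p i y) (hpint : ∀ i, ∫ y : ℝ, p i y = 1)
    (hpbdd : ∀ i, ∃ C, ∀ y, p i y ≤ C)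
    (x : ℝ)
    (hpcont : ContinuousAt (p (⟨T - 1, Nat.sub_lt hT Nat.one_pos⟩ : Fin T)) x)
    -- for each n: batch sizes, bandwidths, weights, and samples
    (nb : ℕ → Fin T → ℕ) (hnb : ∀ n i, 0 < nb n i)
    (σ : ℕ → Fin T → ℝ) (hσ : ∀ n i, 0 < σ n i)
    (α : ℕ → Fin T → ℝ) (hα : ∀ n i, 0 ≤ α n i) (hαsum : ∀ n, ∑ i, α n i = 1)
    (X : (n : ℕ) → (i : Fin T) → Fin (nb n i) → Ω → ℝ)
    (hXmeas : ∀ n i j, Measurable (X n i j))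
    (hindep : ∀ n, iIndepFun
      (fun q : (i : Fin T) × Fin (nb n i) => X n q.1 q.2) μ)
    (hdist : ∀ n i j, Measure.map (X n i j) μ
      = volume.withDensity (fun y => ENNReal.ofReal (p i y)))
    -- asymptotic assumptions
    (hσ0 : ∀ i, Tendsto (fun n => σ n i) atTop (𝓝 0))
    (hnσ : ∀ i, Tendsto (fun n => (nb n i : ℝ) * σ n i) atTop atTop)
    (hα0 : ∀ i : Fin T, i ≠ (⟨T - 1, Nat.sub_lt hT Nat.one_pos⟩ : Fin T) →
      Tendsto (fun n => α n i) atTop (𝓝 0))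
    (hα1 : Tendsto (fun n => α n (⟨T - 1, Nat.sub_lt hT Nat.one_pos⟩ : Fin T))
      atTop (𝓝 1))
    -- the sliding-window estimators
    (hhat : ℕ → Ω → ℝ)
    (hhat_def : ∀ n ω, hhat n ω
      = ∑ i, α n i * ((nb n i : ℝ)⁻¹ * ∑ j, scaledKernel K (σ n i) (x - X n i j ω))) :
    Tendsto
      (fun n => ∫ ω,
        (hhat n ω - p (⟨T - 1, Nat.sub_lt hT Nat.one_pos⟩ : Fin T) x) ^ 2 ∂μ)
      atTop (𝓝 0)
    ∧ ∀ ε : ℝ, 0 < ε →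
        Tendsto
          (fun n => μ {ω |
            ε < |hhat n ω - p (⟨T - 1, Nat.sub_lt hT Nat.one_pos⟩ : Fin T) x| ^ 2})
          atTop (𝓝 0) :=
  takde_pointwise_consistency_general μ T hT K hKmeas hKpos hKint hKone hKbdd hKsq p hpmeas hppos
    hpbdd x hpcont nb hnb σ hσ α X hXmeas hindep hdist hσ0 hnσ hα0 hα1 hhat hhat_def
end
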